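/- Let H be a Hermitian matrix indexed by pairs (x,s), x ∈ {0,…,n−1} a site and s ∈ {A,B}, which is short range with parameters d > 0, K_d > 0. Then for every t ∈ ℝ and all sites x, y with |x−y| ≥ d, the Lieb–Robinson-type bound ‖(e^{itH})_{x,y}‖ ≤ 2·|t|·K_d·e^{|t|·K_d − |x−y|/d} holds. -/

import Mathlib

open MeasureTheory
open scoped ComplexOrder

noncomputable section

namespace Chiral

/-- The ℓ²-operator norm of a square complex matrix. -/
def opNorm {n : Type*} [Fintype n] [DecidableEq n] (T : Matrix n n ℂ) : ℝ :=
  ‖Matrix.toEuclideanCLM (𝕜 := ℂ) T‖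

/-- The positive semidefinite square root (the former `Matrix.PosSemidef.sqrt`). -/
def psdSqrt {n : Type*} [Fintype n] [DecidableEq n] {A : Matrix n n ℂ}
    (hA : A.PosSemidef) : Matrix n n ℂ :=
  (hA.1.eigenvectorUnitary : Matrix n n ℂ) *
    Matrix.diagonal ((↑) ∘ (fun x : ℝ => Real.sqrt x) ∘ hA.1.eigenvalues) *
    (star hA.1.eigenvectorUnitary : Matrix n n ℂ)

/-- The trace norm `Tr √(T*T)` of a square complex matrix. -/
def traceNorm {n : Type*} [Fintype n] [DecidableEq n] (T : Matrix n n ℂ) : ℝ :=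
  ((psdSqrt (Matrix.posSemidef_conjTranspose_mul_self T)).trace).re

open Classical in
/-- Functional calculus of a Hermitian matrix: same eigenvectors, eigenvalue `E`
replaced by `f E`.  (Junk value `0` if the matrix is not Hermitian.) -/
def matFun {n : Type*} [Fintype n] [DecidableEq n] (f : ℝ → ℂ) (H : Matrix n n ℂ) :
    Matrix n n ℂ :=
  if hH : H.IsHermitian then
    (hH.eigenvectorUnitary : Matrix n n ℂ) *
      Matrix.diagonal (fun i => f (hH.eigenvalues i)) *
      star (hH.eigenvectorUnitary : Matrix n n ℂ)
  else 0

/-- The matrix exponential. -/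
def matExp {n : Type*} [Fintype n] [DecidableEq n] (M : Matrix n n ℂ) : Matrix n n ℂ :=
  NormedSpace.exp M

/-- `S = tanh (H/δ)` by functional calculus. -/
def tanhOf {n : Type*} [Fintype n] [DecidableEq n] (δ : ℝ) (H : Matrix n n ℂ) :
    Matrix n n ℂ :=
  matFun (fun E => (Real.tanh (E / δ) : ℂ)) H

/-- Index set of the finite chain of length `L` with two internal degrees of freedom. -/
abbrev Site (L : ℕ) := Fin L × Fin 2

/-- The `2×2` block of a matrix on the chain corresponding to sites `x, y`. -/
def matBlock {L : ℕ} (T : Matrix (Site L) (Site L) ℂ) (x y : Fin L) :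
    Matrix (Fin 2) (Fin 2) ℂ :=
  Matrix.of fun s s' => T (x, s) (y, s')

/-- A finite Hamiltonian is short range with parameters `d`, `K`. -/
def FinShortRange {L : ℕ} (H : Matrix (Site L) (Site L) ℂ) (d K : ℝ) : Prop :=
  ∀ x : Fin L, ∑ y : Fin L,
    opNorm (matBlock H x y) * Real.exp (|((x : ℕ) : ℝ) - ((y : ℕ) : ℝ)| / d) ≤ K

/-- The chiral operator `C` on the finite chain: `+1` on the `A` component,
`-1` on the `B` component. -/
def chiralC (L : ℕ) : Matrix (Site L) (Site L) ℂ :=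
  Matrix.diagonal fun p => if p.2 = 0 then 1 else -1

/-- The diagonal matrix `θ(X)` associated to a switch function `θ`. -/
def switchX {L : ℕ} (θ : Fin L → ℝ) : Matrix (Site L) (Site L) ℂ :=
  Matrix.diagonal fun p => (θ p.1 : ℂ)

/-- The standard switch function: `1` on the left half (`x < L/2`), `0` on the right half. -/
def midSwitch (L : ℕ) : Fin L → ℝ := fun x => if ((x : ℕ) : ℝ) < (L : ℝ) / 2 then 1 else 0

/-- The edge index `Tr (C θ(X) (1 - S²))`. -/
def edgeIndex {L : ℕ} (θ : Fin L → ℝ) (S : Matrix (Site L) (Site L) ℂ) : ℂ :=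
  Matrix.trace (chiralC L * switchX θ * (1 - S * S))

/-- The bulk index `½ Tr (C S [θ(X), S])`. -/
def bulkIndex {L : ℕ} (θ : Fin L → ℝ) (S : Matrix (Site L) (Site L) ℂ) : ℂ :=
  (1 / 2 : ℂ) * Matrix.trace (chiralC L * S * (switchX θ * S - S * switchX θ))

/-- The bulk Hilbert space `ℓ²(ℤ; ℂ²)`. -/
abbrev BulkSpace := lp (fun _ : ℤ => EuclideanSpace ℂ (Fin 2)) 2

/-- Bounded operators on the bulk Hilbert space. -/
abbrev BulkOp := BulkSpace →L[ℂ] BulkSpace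

/-- The canonical basis vector at site `x` with internal index `s`. -/
def bvec (x : ℤ) (s : Fin 2) : BulkSpace := lp.single 2 x (EuclideanSpace.single s 1)

/-- The `2×2` block `T_{x,y}` of a bulk operator. -/
def bulkBlock (T : BulkOp) (x y : ℤ) : Matrix (Fin 2) (Fin 2) ℂ :=
  Matrix.of fun s s' => (inner ℂ (bvec x s) (T (bvec y s')) : ℂ)

/-- A bulk Hamiltonian is short range with parameters `d`, `K`:
`sup_x ∑_y ‖T_{x,y}‖ e^{|x-y|/d} ≤ K`. -/
def BulkShortRange (T : BulkOp) (d K : ℝ) : Prop :=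
  ∀ x : ℤ,
    Summable (fun y : ℤ => opNorm (bulkBlock T x y) * Real.exp (|((x : ℝ)) - ((y : ℝ))| / d)) ∧
    ∑' y : ℤ, opNorm (bulkBlock T x y) * Real.exp (|((x : ℝ)) - ((y : ℝ))| / d) ≤ K

/-- The spectrum of `T` does not meet the open interval `(-Δ, Δ)`. -/
def HasGap (T : BulkOp) (Δ : ℝ) : Prop :=
  ∀ r : ℝ, |r| < Δ → (r : ℂ) ∉ spectrum ℂ T

/-- The on-site chiral matrix `diag(1, -1)`. -/
def c2 : Matrix (Fin 2) (Fin 2) ℂ := Matrix.diagonal fun s => if s = 0 then 1 else -1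

/-- A bulk operator is chiral: it anticommutes with the bulk chiral operator
(expressed blockwise, which is equivalent). -/
def ChiralBulk (T : BulkOp) : Prop :=
  ∀ x y : ℤ, c2 * bulkBlock T x y + bulkBlock T x y * c2 = 0

/-- The restriction `ι* T ι` of a bulk operator to the finite open chain of length `L`. -/
def restrict (L : ℕ) (T : BulkOp) : Matrix (Site L) (Site L) ℂ :=
  Matrix.of fun p q => bulkBlock T ((p.1 : ℕ) : ℤ) ((q.1 : ℕ) : ℤ) p.2 q.2

/-!
Expand `exp (M)` in its power series. The weighted row norm `sup_x ∑_y ‖T_{x,y}‖ e^{|x-y|/d}` is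
submultiplicative, because `e^{|x-y|/d} ≤ e^{|x-z|/d} e^{|z-y|/d}`; hence `M ^ k` has weighted norm
at most `a ^ k` when `M` has weighted norm `a`, and each of its blocks satisfies
`‖(M ^ k)_{x,y}‖ ≤ a ^ k e^{-|x-y|/d}`. Off the diagonal the `k = 0` term vanishes, so summing gives
`‖(exp M)_{x,y}‖ ≤ (e^a - 1) e^{-|x-y|/d} ≤ a e^{a - |x-y|/d}`, applied to `M = i t H`, `a = |t| K_d`.
-/

open scoped Nat

section OpNorm

variable {m : Type*} [Fintype m] [DecidableEq m]

lemma opNorm_nonneg (A : Matrix m m ℂ) : 0 ≤ opNorm A := norm_nonneg _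

lemma opNorm_mul_le (A B : Matrix m m ℂ) : opNorm (A * B) ≤ opNorm A * opNorm B := by
  rw [opNorm, map_mul]
  exact norm_mul_le _ _

lemma opNorm_smul (c : ℂ) (A : Matrix m m ℂ) : opNorm (c • A) = ‖c‖ * opNorm A := by
  rw [opNorm, _root_.map_smul]
  exact norm_smul _ _

lemma opNorm_sum_le {ι : Type*} (s : Finset ι) (f : ι → Matrix m m ℂ) :
    opNorm (∑ i ∈ s, f i) ≤ ∑ i ∈ s, opNorm (f i) := by
  rw [opNorm, map_sum]
  exact norm_sum_le _ _

end OpNorm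

section Blocks

variable {L : ℕ}

lemma matBlock_mul (A B : Matrix (Site L) (Site L) ℂ) (x y : Fin L) :
    matBlock (A * B) x y = ∑ z, matBlock A x z * matBlock B z y := by
  ext s s'
  simp [matBlock, Matrix.mul_apply, Matrix.sum_apply, Fintype.sum_prod_type]

lemma matBlock_smul (c : ℂ) (A : Matrix (Site L) (Site L) ℂ) (x y : Fin L) :
    matBlock (c • A) x y = c • matBlock A x y := rfl

lemma matBlock_one_of_ne {x y : Fin L} (h : x ≠ y) :
    matBlock (1 : Matrix (Site L) (Site L) ℂ) x y = 0 := by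
  ext s s'
  simp [matBlock, h]

lemma opNorm_matBlock_mul_le (A B : Matrix (Site L) (Site L) ℂ) (x y : Fin L) :
    opNorm (matBlock (A * B) x y) ≤ ∑ z, opNorm (matBlock A x z) * opNorm (matBlock B z y) := by
  rw [matBlock_mul]
  exact (opNorm_sum_le _ _).trans (Finset.sum_le_sum fun z _ => opNorm_mul_le _ _)

variable (L) in
@[simps]
def matBlockLinearMap (x y : Fin L) :
    Matrix (Site L) (Site L) ℂ →ₗ[ℂ] Matrix (Fin 2) (Fin 2) ℂ where
  toFun T := matBlock T x y
  map_add' _ _ := rfl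
  map_smul' _ _ := rfl

end Blocks

lemma exp_abs_sub_div_le_mul {d : ℝ} (hd : 0 ≤ d) (a b c : ℝ) :
    Real.exp (|a - c| / d) ≤ Real.exp (|a - b| / d) * Real.exp (|b - c| / d) := by
  rw [← Real.exp_add, ← add_div]
  gcongr
  exact abs_sub_le a b c

lemma exp_sub_one_le_mul_exp (a : ℝ) : Real.exp a - 1 ≤ a * Real.exp a := by
  have h := mul_le_mul_of_nonneg_right (Real.add_one_le_exp (-a)) (Real.exp_pos a).le
  rw [← Real.exp_add, neg_add_cancel, Real.exp_zero] at h
  linarith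

namespace FinShortRange

variable {L : ℕ} {d K K' : ℝ} {A B : Matrix (Site L) (Site L) ℂ}

lemma nonneg (h : FinShortRange A d K) (x : Fin L) : 0 ≤ K :=
  (Finset.sum_nonneg fun _ _ => mul_nonneg (opNorm_nonneg _) (Real.exp_pos _).le).trans (h x)

lemma opNorm_matBlock_le (h : FinShortRange A d K) (x y : Fin L) :
    opNorm (matBlock A x y) ≤ K * Real.exp (-(|((x : ℕ) : ℝ) - ((y : ℕ) : ℝ)| / d)) := by
  rw [Real.exp_neg, ← div_eq_mul_inv, le_div_iff₀ (Real.exp_pos _)]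
  refine le_trans ?_ (h x)
  exact Finset.single_le_sum (f := fun y => opNorm (matBlock A x y) *
      Real.exp (|((x : ℕ) : ℝ) - ((y : ℕ) : ℝ)| / d))
    (fun z _ => mul_nonneg (opNorm_nonneg _) (Real.exp_pos _).le) (Finset.mem_univ y)

lemma smul (h : FinShortRange A d K) (c : ℂ) : FinShortRange (c • A) d (‖c‖ * K) := by
  intro x
  simp_rw [matBlock_smul, opNorm_smul, mul_assoc, ← Finset.mul_sum]
  exact mul_le_mul_of_nonneg_left (h x) (norm_nonneg c)

lemma mul (hd : 0 ≤ d) (hA : FinShortRange A d K) (hB : FinShortRange B d K') :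
    FinShortRange (A * B) d (K * K') := by
  intro x
  set w : Fin L → Fin L → ℝ := fun a b => Real.exp (|((a : ℕ) : ℝ) - ((b : ℕ) : ℝ)| / d)
  have hw : ∀ a b, 0 ≤ w a b := fun a b => (Real.exp_pos _).le
  calc ∑ y, opNorm (matBlock (A * B) x y) * w x y
      ≤ ∑ y, ∑ z, opNorm (matBlock A x z) * opNorm (matBlock B z y) * w x y := by
        refine Finset.sum_le_sum fun y _ => ?_
        rw [← Finset.sum_mul]
        exact mul_le_mul_of_nonneg_right (opNorm_matBlock_mul_le A B x y) (hw x y)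
    _ ≤ ∑ z, ∑ y, (opNorm (matBlock A x z) * w x z) * (opNorm (matBlock B z y) * w z y) := by
        rw [Finset.sum_comm]
        refine Finset.sum_le_sum fun z _ => Finset.sum_le_sum fun y _ => ?_
        calc _ ≤ opNorm (matBlock A x z) * opNorm (matBlock B z y) * (w x z * w z y) :=
              mul_le_mul_of_nonneg_left (exp_abs_sub_div_le_mul hd _ _ _)
                (mul_nonneg (opNorm_nonneg _) (opNorm_nonneg _))
          _ = _ := by ring
    _ ≤ ∑ z, (opNorm (matBlock A x z) * w x z) * K' := by
        refine Finset.sum_le_sum fun z _ => ?_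
        rw [← Finset.mul_sum]
        exact mul_le_mul_of_nonneg_left (hB z) (mul_nonneg (opNorm_nonneg _) (hw x z))
    _ ≤ K * K' := by
        rw [← Finset.sum_mul]
        exact mul_le_mul_of_nonneg_right (hA x) (hB.nonneg x)

lemma pow_succ (hd : 0 ≤ d) (h : FinShortRange A d K) (k : ℕ) :
    FinShortRange (A ^ (k + 1)) d (K ^ (k + 1)) := by
  induction k with
  | zero => simpa using h
  | succ k ih => simpa [_root_.pow_succ] using ih.mul hd h

end FinShortRange

lemma hasSum_map_matExp {m E : Type*} [Fintype m] [DecidableEq m] [NormedAddCommGroup E]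
    [NormedSpace ℂ E] (Φ : Matrix m m ℂ →ₗ[ℂ] E) (M : Matrix m m ℂ) :
    HasSum (fun k => Φ ((k ! : ℂ)⁻¹ • M ^ k)) (Φ (matExp M)) := by
  -- any algebra norm does: the statement only sees the product topology
  let _ : NormedRing (Matrix m m ℂ) := Matrix.linftyOpNormedRing
  let _ : NormedAlgebra ℂ (Matrix m m ℂ) := Matrix.linftyOpNormedAlgebra
  exact (NormedSpace.exp_series_hasSum_exp' (𝕂 := ℂ) M).map Φ
    (LinearMap.continuous_of_finiteDimensional Φ)

lemma norm_le_mul_exp_sub_one_of_hasSum {E : Type*} [SeminormedAddCommGroup E] {f : ℕ → E}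
    {S : E} (hf : HasSum f S) (h0 : f 0 = 0) {c a : ℝ}
    (hbound : ∀ k, ‖f (k + 1)‖ ≤ c * (a ^ (k + 1) / (k + 1)!)) :
    ‖S‖ ≤ c * (Real.exp a - 1) := by
  have hS : HasSum (fun k => f (k + 1)) S := by
    simpa [h0] using (hasSum_nat_add_iff' 1).mpr hf
  have hexp : HasSum (fun k => c * (a ^ (k + 1) / (k + 1)!)) (c * (Real.exp a - 1)) := by
    refine HasSum.mul_left c ?_
    simpa [Real.exp_eq_exp_ℝ] using (hasSum_nat_add_iff' 1).mpr
      (NormedSpace.expSeries_div_hasSum_exp a)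
  exact hS.norm_le_of_bounded hexp hbound

lemma FinShortRange.opNorm_matBlock_matExp_le {L : ℕ} {d a : ℝ}
    {M : Matrix (Site L) (Site L) ℂ} (hd : 0 ≤ d) (h : FinShortRange M d a) {x y : Fin L}
    (hxy : x ≠ y) :
    opNorm (matBlock (matExp M) x y) ≤
      Real.exp (-(|((x : ℕ) : ℝ) - ((y : ℕ) : ℝ)| / d)) * (Real.exp a - 1) := by
  let blk := (Matrix.toEuclideanCLM (𝕜 := ℂ) (n := Fin 2)).toAlgEquiv.toLinearMap ∘ₗ
    matBlockLinearMap L x y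
  refine norm_le_mul_exp_sub_one_of_hasSum (hasSum_map_matExp blk M) ?_ fun k => ?_
  · simp [blk, matBlock_one_of_ne hxy]
  · have hk := ((h.pow_succ hd k).smul ((k + 1)! : ℂ)⁻¹).opNorm_matBlock_le x y
    rw [norm_inv, Complex.norm_natCast] at hk
    refine hk.trans_eq ?_
    ring

theorem stmt16_general {n : ℕ} (H : Matrix (Site n) (Site n) ℂ)
    (d Kd : ℝ) (hd : 0 < d) (hsr : FinShortRange H d Kd)
    (t : ℝ) (x y : Fin n) (hxy : d ≤ |((x : ℕ) : ℝ) - ((y : ℕ) : ℝ)|) :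
    opNorm (matBlock (matExp ((Complex.I * (t : ℂ)) • H)) x y) ≤
      2 * |t| * Kd * Real.exp (|t| * Kd - |((x : ℕ) : ℝ) - ((y : ℕ) : ℝ)| / d) := by
  set r := |((x : ℕ) : ℝ) - ((y : ℕ) : ℝ)|
  have hne : x ≠ y := by
    rintro rfl
    simp [r] at hxy
    linarith
  have hM : FinShortRange ((Complex.I * (t : ℂ)) • H) d (|t| * Kd) := by
    simpa using hsr.smul (Complex.I * t)
  have ha : 0 ≤ |t| * Kd := mul_nonneg (abs_nonneg t) (hsr.nonneg x)
  calc _ ≤ Real.exp (-(r / d)) * (Real.exp (|t| * Kd) - 1) :=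
        hM.opNorm_matBlock_matExp_le hd.le hne
    _ ≤ Real.exp (-(r / d)) * (|t| * Kd * Real.exp (|t| * Kd)) := by
        gcongr
        exact exp_sub_one_le_mul_exp _
    _ = |t| * Kd * Real.exp (|t| * Kd - r / d) := by
        rw [sub_eq_add_neg, Real.exp_add]
        ring
    _ ≤ 2 * |t| * Kd * Real.exp (|t| * Kd - r / d) := by
        have := mul_nonneg ha (Real.exp_pos (|t| * Kd - r / d)).le
        linarith

theorem stmt16 {n : ℕ} (H : Matrix (Site n) (Site n) ℂ) (hH : H.IsHermitian)
    (d Kd : ℝ) (hd : 0 < d) (hKd : 0 < Kd) (hsr : FinShortRange H d Kd)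
    (t : ℝ) (x y : Fin n) (hxy : d ≤ |((x : ℕ) : ℝ) - ((y : ℕ) : ℝ)|) :
    opNorm (matBlock (matExp ((Complex.I * (t : ℂ)) • H)) x y) ≤
      2 * |t| * Kd * Real.exp (|t| * Kd - |((x : ℕ) : ℝ) - ((y : ℕ) : ℝ)| / d) :=
  stmt16_general H d Kd hd hsr t x y hxy

end Chiral

end
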